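/- arXiv:2410.10457 — 6 statements merged into one kernel-verified Lean document; each statement's English description precedes it below -/
import Mathlib

section
/- For every $t\in[0,T]$ and all $x,y\in\mathbb{W}$, the singular drift $f_k$ is one-sided Lipschitz on the Weyl chamber: $\langle x-y,\, f_k(t,x)-f_k(t,y)\rangle\le 0$. -/
open scoped RealInnerProductSpace

/-- The singular drift `f_k(t,x) = ∑_{α ∈ R₊} (k(t,α) / ⟨α,x⟩) α`. -/
noncomputable def fk {d : ℕ} (Rp : Finset (EuclideanSpace ℝ (Fin d)))
    (k : ℝ → EuclideanSpace ℝ (Fin d) → ℝ) (t : ℝ)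
    (x : EuclideanSpace ℝ (Fin d)) : EuclideanSpace ℝ (Fin d) :=
  ∑ α ∈ Rp, (k t α / ⟪α, x⟫) • α

theorem stmt_5 {d : ℕ} (T : ℝ) (hT : 0 < T)
    (Rp : Finset (EuclideanSpace ℝ (Fin d))) (hne : Rp.Nonempty)
    (h0 : ∀ α ∈ Rp, α ≠ 0)
    (k : ℝ → EuclideanSpace ℝ (Fin d) → ℝ)
    (hk : ∀ t ∈ Set.Icc (0 : ℝ) T, ∀ α ∈ Rp, 0 < k t α)
    (t : ℝ) (ht : t ∈ Set.Icc (0 : ℝ) T)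
    (x y : EuclideanSpace ℝ (Fin d))
    (hx : ∀ α ∈ Rp, 0 < ⟪α, x⟫) (hy : ∀ α ∈ Rp, 0 < ⟪α, y⟫) :
    ⟪x - y, fk Rp k t x - fk Rp k t y⟫ ≤ 0 := by
  unfold fk
  rw [← Finset.sum_sub_distrib, inner_sum]
  apply Finset.sum_nonpos
  intro α hα
  have ha := hx α hα
  have hb := hy α hα
  have hkp := hk t ht α hα
  rw [← sub_smul, real_inner_smul_right, inner_sub_left]
  rw [real_inner_comm α x, real_inner_comm α y]
  set a := (⟪α, x⟫ : ℝ)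
  set b := (⟪α, y⟫ : ℝ)
  have key : (k t α / a - k t α / b) * (a - b)
      = -(k t α * (a - b)^2 / (a * b)) := by
    field_simp
    ring
  rw [key, neg_nonpos]
  positivity
end

section
/- Suppose the Weyl chamber $\mathbb{W}$ is nonempty and let $c:R_+\to(0,\infty)$ be any function. Then for every $x\in\mathbb{R}^d$ the equation $y=x+\sum_{\alpha\in R_+}\frac{c(\alpha)}{\langle\alpha,y\rangle}\alpha$ has a unique solution $y\in\mathbb{W}$. -/
open scoped RealInnerProductSpace
open Finset Filter Topology

/-!
The solutions in `W` are exactly the critical points of the potential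
`g z = ‖z - x‖² / 2 - ∑ c α log ⟪α, z⟫` on the open cone `W`. Since `log t ≤ t`, `g` grows
quadratically at infinity, and on bounded sets it blows up at the boundary of `W` through the
logarithmic barrier; so `g` attains its minimum on `W`, which gives a solution. Uniqueness is
the strict monotonicity of the gradient: subtracting the equations for two solutions `y₁, y₂`
expresses `‖y₁ - y₂‖²` as a sum of terms `(c/a₁ - c/a₂)(a₁ - a₂) ≤ 0`.
-/

theorem div_sub_div_mul_sub_nonpos {a b c : ℝ} (hc : 0 ≤ c) (ha : 0 < a) (hb : 0 < b) :
    (c / a - c / b) * (a - b) ≤ 0 := by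
  have : (c / a - c / b) * (a - b) = -(c * (a - b) ^ 2 / (a * b)) := by
    field_simp; ring
  rw [this, neg_nonpos]
  positivity

theorem exists_pos_forall_le_and_mul_log_le {ι : Type*} (s : Finset ι) {a c : ι → ℝ}
    (ha : ∀ i ∈ s, 0 < a i) (hc : ∀ i ∈ s, 0 < c i) (M : ℝ) :
    ∃ ε > 0, ∀ i ∈ s, ε ≤ a i ∧ c i * Real.log ε ≤ M := by
  have hev : ∀ᶠ ε in 𝓝[>] (0 : ℝ), ∀ i ∈ s, ε ≤ a i ∧ c i * Real.log ε ≤ M := by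
    refine (eventually_all_finset s).2 fun i hi => ?_
    exact ((eventually_le_nhds (ha i hi)).filter_mono nhdsWithin_le_nhds).and
      ((Real.tendsto_log_nhdsGT_zero.const_mul_atBot (hc i hi)).eventually_le_atBot M)
  exact (hev.and self_mem_nhdsWithin).exists.imp fun ε h => ⟨h.2, h.1⟩

theorem IsCompact.exists_isMinOn_of_le_of_notMem {X β : Type*} [TopologicalSpace X]
    [LinearOrder β] [TopologicalSpace β] [ClosedIicTopology β] {f : X → β} {s K : Set X}
    (hK : IsCompact K) (hf : ContinuousOn f K) {w : X} (hw : w ∈ K)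
    (hout : ∀ z ∈ s, z ∉ K → f w ≤ f z) : ∃ y ∈ K, IsMinOn f s y := by
  obtain ⟨y, hyK, hy⟩ := hK.exists_isMinOn ⟨w, hw⟩ hf
  refine ⟨y, hyK, fun z hz => ?_⟩
  by_cases hzK : z ∈ K
  · exact hy hzK
  · exact (hy hw).trans (hout z hz hzK)

section

variable {E : Type*} [NormedAddCommGroup E] [InnerProductSpace ℝ E]

def weylChamber (Rp : Finset E) : Set E := {z | ∀ α ∈ Rp, 0 < ⟪α, z⟫}

theorem isOpen_weylChamber (Rp : Finset E) : IsOpen (weylChamber Rp) := by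
  simp only [weylChamber, Set.ofPred_forall]
  exact isOpen_biInter_finset fun α _ =>
    isOpen_lt continuous_const (continuous_const.inner continuous_id)

theorem eq_of_mem_weylChamber_of_eq_add_sum {Rp : Finset E} {c : E → ℝ}
    (hc : ∀ α ∈ Rp, 0 ≤ c α) {x y₁ y₂ : E} (h₁ : y₁ ∈ weylChamber Rp)
    (h₂ : y₂ ∈ weylChamber Rp) (e₁ : y₁ = x + ∑ α ∈ Rp, (c α / ⟪α, y₁⟫) • α)
    (e₂ : y₂ = x + ∑ α ∈ Rp, (c α / ⟪α, y₂⟫) • α) : y₁ = y₂ := by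
  have hdiff : y₁ - y₂ = ∑ α ∈ Rp, (c α / ⟪α, y₁⟫ - c α / ⟪α, y₂⟫) • α := by
    conv_lhs => rw [e₁, e₂]
    rw [add_sub_add_left_eq_sub, ← sum_sub_distrib]
    simp only [sub_smul]
  have hsq : ‖y₁ - y₂‖ ^ 2 ≤ 0 := calc
    ‖y₁ - y₂‖ ^ 2 = ⟪y₁ - y₂, y₁ - y₂⟫ := (real_inner_self_eq_norm_sq _).symm
    _ = ∑ α ∈ Rp, (c α / ⟪α, y₁⟫ - c α / ⟪α, y₂⟫) * (⟪α, y₁⟫ - ⟪α, y₂⟫) := by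
      nth_rw 1 [hdiff]
      simp only [sum_inner, real_inner_smul_left, inner_sub_right, mul_sub, sum_sub_distrib]
    _ ≤ 0 := sum_nonpos fun α hα => div_sub_div_mul_sub_nonpos (hc α hα) (h₁ α hα) (h₂ α hα)
  simpa [sub_eq_zero] using hsq

theorem sum_mul_log_inner_le {s : Finset E} {c : E → ℝ} (hc : ∀ α ∈ s, 0 ≤ c α) {z : E}
    (hz : z ∈ weylChamber s) :
    ∑ α ∈ s, c α * Real.log ⟪α, z⟫ ≤ (∑ α ∈ s, c α * ‖α‖) * ‖z‖ := by
  rw [sum_mul]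
  refine sum_le_sum fun α hα => ?_
  rw [mul_assoc]
  exact mul_le_mul_of_nonneg_left
    ((Real.log_le_self (hz α hα).le).trans (real_inner_le_norm α z)) (hc α hα)

noncomputable def logPotential (Rp : Finset E) (c : E → ℝ) (x z : E) : ℝ :=
  ‖z - x‖ ^ 2 / 2 - ∑ α ∈ Rp, c α * Real.log ⟪α, z⟫

theorem hasFDerivAt_logPotential (Rp : Finset E) (c : E → ℝ) (x : E) {y : E}
    (hy : ∀ α ∈ Rp, ⟪α, y⟫ ≠ 0) :
    HasFDerivAt (logPotential Rp c x)
      (innerSL ℝ (y - x - ∑ α ∈ Rp, (c α / ⟪α, y⟫) • α)) y := by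
  have hsq : HasFDerivAt (fun z => ‖z - x‖ ^ 2 / 2) (innerSL ℝ (y - x)) y := by
    refine (((hasFDerivAt_id y).sub_const x).norm_sq.mul_const 2⁻¹).congr_fderiv ?_
    ext v; simp
  have hlog : HasFDerivAt (fun z => ∑ α ∈ Rp, c α * Real.log ⟪α, z⟫)
      (∑ α ∈ Rp, (c α / ⟪α, y⟫) • innerSL ℝ α) y := by
    refine HasFDerivAt.fun_sum fun α hα => ?_
    refine (((Real.hasDerivAt_log (hy α hα)).comp_hasFDerivAt y
      (innerSL ℝ α).hasFDerivAt).const_mul (c α)).congr_fderiv ?_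
    ext v; simp [div_eq_mul_inv]; ring
  refine (hsq.sub hlog).congr_fderiv ?_
  ext v
  simp

theorem continuousOn_logPotential (Rp : Finset E) (c : E → ℝ) (x : E) :
    ContinuousOn (logPotential Rp c x) (weylChamber Rp) := fun _ hz =>
  (hasFDerivAt_logPotential Rp c x fun α hα => (hz α hα).ne').continuousAt.continuousWithinAt

theorem IsLocalMin.eq_add_sum_of_logPotential {Rp : Finset E} {c : E → ℝ} {x y : E}
    (hmin : IsLocalMin (logPotential Rp c x) y) (hy : y ∈ weylChamber Rp) :
    y = x + ∑ α ∈ Rp, (c α / ⟪α, y⟫) • α := by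
  set v := y - x - ∑ α ∈ Rp, (c α / ⟪α, y⟫) • α
  have h := congr($(hmin.hasFDerivAt_eq_zero
    (hasFDerivAt_logPotential Rp c x fun α hα => (hy α hα).ne')) v)
  rwa [innerSL_apply_apply, zero_apply, inner_self_eq_zero, sub_sub, sub_eq_zero] at h

theorem logPotential_ge_sq_sub_mul {Rp : Finset E} {c : E → ℝ} (hc : ∀ α ∈ Rp, 0 ≤ c α)
    (x : E) {z : E} (hz : z ∈ weylChamber Rp) :
    ‖z‖ ^ 2 / 2 - (‖x‖ + ∑ α ∈ Rp, c α * ‖α‖) * ‖z‖ ≤ logPotential Rp c x z := by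
  have hlog := sum_mul_log_inner_le hc hz
  have hzx := real_inner_le_norm z x
  rw [logPotential, norm_sub_sq_real]
  nlinarith [sq_nonneg ‖x‖]

theorem logPotential_ge_neg_mul_log_sub_mul {Rp : Finset E} {c : E → ℝ}
    (hc : ∀ α ∈ Rp, 0 ≤ c α) (x : E) {z : E} (hz : z ∈ weylChamber Rp) {α₀ : E}
    (hα₀ : α₀ ∈ Rp) :
    -(c α₀ * Real.log ⟪α₀, z⟫) - (∑ α ∈ Rp, c α * ‖α‖) * ‖z‖ ≤ logPotential Rp c x z := by
  classical
  have hrest : ∑ α ∈ Rp.erase α₀, c α * Real.log ⟪α, z⟫ ≤ (∑ α ∈ Rp, c α * ‖α‖) * ‖z‖ :=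
    (sum_mul_log_inner_le (fun α hα => hc α (mem_of_mem_erase hα))
      fun α hα => hz α (mem_of_mem_erase hα)).trans <|
    mul_le_mul_of_nonneg_right (sum_le_sum_of_subset_of_nonneg (erase_subset α₀ Rp)
      fun α hα _ => mul_nonneg (hc α hα) (norm_nonneg α)) (norm_nonneg z)
  rw [logPotential, ← add_sum_erase Rp (fun α => c α * Real.log ⟪α, z⟫) hα₀]
  nlinarith [sq_nonneg ‖z - x‖]

theorem exists_isMinOn_logPotential [FiniteDimensional ℝ E] {Rp : Finset E} {c : E → ℝ}
    (hc : ∀ α ∈ Rp, 0 < c α) (hW : (weylChamber Rp).Nonempty) (x : E) :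
    ∃ y ∈ weylChamber Rp, IsMinOn (logPotential Rp c x) (weylChamber Rp) y := by
  obtain ⟨w, hw⟩ := hW
  set g := logPotential Rp c x
  set C := ∑ α ∈ Rp, c α * ‖α‖
  have hC : 0 ≤ C := sum_nonneg fun α hα => mul_nonneg (hc α hα).le (norm_nonneg α)
  -- `R` makes `g ≥ g w` outside the ball of radius `R` and puts `w` inside it
  set R := max (max (2 * (‖x‖ + C) + 2) |g w|) ‖w‖
  obtain ⟨ε, hε, hεw⟩ : ∃ ε > 0, ∀ α ∈ Rp, ε ≤ ⟪α, w⟫ ∧ c α * Real.log ε ≤ -(g w + C * R) :=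
    exists_pos_forall_le_and_mul_log_le Rp hw hc _
  set K := Metric.closedBall 0 R ∩ {z | ∀ α ∈ Rp, ε ≤ ⟪α, z⟫}
  have hKW : K ⊆ weylChamber Rp := fun z hz α hα => hε.trans_le (hz.2 α hα)
  have hK : IsCompact K := (isCompact_closedBall 0 R).inter_right <| by
    simp only [Set.ofPred_forall]
    exact isClosed_biInter fun α _ =>
      isClosed_le continuous_const (continuous_const.inner continuous_id)
  have hwK : w ∈ K := ⟨mem_closedBall_zero_iff.2 (le_max_right _ _), fun α hα => (hεw α hα).1⟩
  have hfar : ∀ z ∈ weylChamber Rp, R < ‖z‖ → g w ≤ g z := by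
    intro z hz hzR
    have h1 : ‖z‖ ^ 2 / 2 - (‖x‖ + C) * ‖z‖ ≤ g z :=
      logPotential_ge_sq_sub_mul (fun α hα => (hc α hα).le) x hz
    have h2 : 2 * (‖x‖ + C) + 2 ≤ ‖z‖ := ((le_max_left _ _).trans (le_max_left _ _)).trans hzR.le
    have h3 : |g w| ≤ R := (le_max_right _ _).trans (le_max_left _ _)
    nlinarith [mul_le_mul_of_nonneg_left h2 (norm_nonneg z), le_abs_self (g w)]
  have hedge : ∀ z ∈ weylChamber Rp, ‖z‖ ≤ R → ∀ α ∈ Rp, ⟪α, z⟫ < ε → g w ≤ g z := by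
    intro z hz hzR α hα hαz
    have h1 : -(c α * Real.log ⟪α, z⟫) - C * ‖z‖ ≤ g z :=
      logPotential_ge_neg_mul_log_sub_mul (fun α hα => (hc α hα).le) x hz hα
    have h2 : c α * Real.log ⟪α, z⟫ ≤ c α * Real.log ε :=
      mul_le_mul_of_nonneg_left (Real.log_le_log (hz α hα) hαz.le) (hc α hα).le
    have h3 : C * ‖z‖ ≤ C * R := mul_le_mul_of_nonneg_left hzR hC
    linarith [(hεw α hα).2]
  have hout : ∀ z ∈ weylChamber Rp, z ∉ K → g w ≤ g z := by
    intro z hz hzK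
    rcases le_or_gt ‖z‖ R with hzR | hzR
    · obtain ⟨α, hα, hαz⟩ : ∃ α ∈ Rp, ⟪α, z⟫ < ε := by
        by_contra! h
        exact hzK ⟨mem_closedBall_zero_iff.2 hzR, h⟩
      exact hedge z hz hzR α hα hαz
    · exact hfar z hz hzR
  obtain ⟨y, hyK, hy⟩ :=
    hK.exists_isMinOn_of_le_of_notMem ((continuousOn_logPotential Rp c x).mono hKW) hwK hout
  exact ⟨y, hKW hyK, hy⟩

theorem exists_mem_weylChamber_eq_add_sum [FiniteDimensional ℝ E] {Rp : Finset E}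
    {c : E → ℝ} (hc : ∀ α ∈ Rp, 0 < c α) (hW : (weylChamber Rp).Nonempty) (x : E) :
    ∃ y ∈ weylChamber Rp, y = x + ∑ α ∈ Rp, (c α / ⟪α, y⟫) • α := by
  obtain ⟨y, hy, hmin⟩ := exists_isMinOn_logPotential hc hW x
  exact ⟨y, hy,
    (hmin.isLocalMin ((isOpen_weylChamber Rp).mem_nhds hy)).eq_add_sum_of_logPotential hy⟩

end

theorem stmt_8_general {d : ℕ}
    (Rp : Finset (EuclideanSpace ℝ (Fin d)))
    (hW : ∃ w : EuclideanSpace ℝ (Fin d), ∀ α ∈ Rp, 0 < ⟪α, w⟫)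
    (c : EuclideanSpace ℝ (Fin d) → ℝ) (hc : ∀ α ∈ Rp, 0 < c α)
    (x : EuclideanSpace ℝ (Fin d)) :
    ∃! y : EuclideanSpace ℝ (Fin d),
      (∀ α ∈ Rp, 0 < ⟪α, y⟫) ∧ y = x + ∑ α ∈ Rp, (c α / ⟪α, y⟫) • α := by
  obtain ⟨y, hy, hyeq⟩ := exists_mem_weylChamber_eq_add_sum hc hW x
  exact ⟨y, ⟨hy, hyeq⟩, fun z ⟨hz, hzeq⟩ =>
    eq_of_mem_weylChamber_of_eq_add_sum (fun α hα => (hc α hα).le) hz hy hzeq hyeq⟩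

theorem stmt_8 {d : ℕ}
    (Rp : Finset (EuclideanSpace ℝ (Fin d))) (hne : Rp.Nonempty)
    (h0 : ∀ α ∈ Rp, α ≠ 0)
    (hW : ∃ w : EuclideanSpace ℝ (Fin d), ∀ α ∈ Rp, 0 < ⟪α, w⟫)
    (c : EuclideanSpace ℝ (Fin d) → ℝ) (hc : ∀ α ∈ Rp, 0 < c α)
    (x : EuclideanSpace ℝ (Fin d)) :
    ∃! y : EuclideanSpace ℝ (Fin d),
      (∀ α ∈ Rp, 0 < ⟪α, y⟫) ∧ y = x + ∑ α ∈ Rp, (c α / ⟪α, y⟫) • α :=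
  stmt_8_general Rp hW c hc x
end

section
/- Let $R$ be a reduced root system in $\mathbb{R}^d$ with positive system $R_+$. Then the polynomial $\pi(x)=\prod_{\alpha\in R_+}\langle\alpha,x\rangle$ is harmonic: $\Delta\pi(x)=0$ for all $x\in\mathbb{R}^d$, where $\Delta=\sum_{i=1}^d\partial^2/\partial x_i^2$ is the Laplacian. -/
/-!
Write `L v x = ∑_{i ≠ j} ⟪v i, v j⟫ ∏_{k ≠ i, j} ⟪v k, x⟫`; differentiating twice and summing over
an orthonormal basis shows `Δπ = L` for `π = ∏ ⟪v i, ·⟫`. For the reflection `σ` in a positive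
root `α` we have `σ γ = ± τ γ` with `τ` a permutation of `R₊`, and the product of the signs is
`-1`. Since `L` is odd in each `v i` and invariant under isometries, `L ∘ σ = -L`, so `L` vanishes
on every hyperplane `α⊥`. On a line `x + ℝβ` meeting these `|R₊|` hyperplanes in distinct points,
`L` is a polynomial of degree at most `|R₊| - 2` with `|R₊|` roots, hence zero; such `x` are dense.
-/

open scoped RealInnerProductSpace
open Finset Polynomial

variable {ι E : Type*} [NormedAddCommGroup E] [InnerProductSpace ℝ E]

theorem dense_setOf_inner_ne_zero {w : E} (hw : w ≠ 0) : Dense {x : E | ⟪w, x⟫ ≠ 0} := by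
  have hker : {x : E | ⟪w, x⟫ ≠ 0} = (LinearMap.ker (innerₛₗ ℝ w) : Set E)ᶜ := by
    ext; simp
  rw [hker, ← interior_eq_empty_iff_dense_compl, ← Set.not_nonempty_iff_eq_empty]
  intro h
  have htop := LinearMap.ker_eq_top.1 ((LinearMap.ker _).eq_top_of_nonempty_interior' h)
  exact hw (inner_self_eq_zero.1 (LinearMap.congr_fun htop w))

theorem dense_setOf_injective_inner_div [Finite ι] [CompleteSpace E] {v : ι → E} {β : E}
    (hβ : ∀ i, ⟪v i, β⟫ ≠ 0) (hv : ∀ i j (c : ℝ), v i = c • v j → i = j) :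
    Dense {x | Function.Injective fun i => ⟪v i, x⟫ / ⟪v i, β⟫} := by
  set w : ι × ι → E := fun p => ⟪v p.2, β⟫ • v p.1 - ⟪v p.1, β⟫ • v p.2
  have hw : ∀ p : ι × ι, p.1 ≠ p.2 → w p ≠ 0 := by
    intro p hp hwp
    refine hp (hv p.1 p.2 (⟪v p.1, β⟫ / ⟪v p.2, β⟫) ?_)
    rw [div_eq_inv_mul, mul_smul, ← sub_eq_zero.1 hwp, inv_smul_smul₀ (hβ p.2)]
  have hdense : Dense (⋂ p ∈ {p : ι × ι | p.1 ≠ p.2}, {x | ⟪w p, x⟫ ≠ 0}) :=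
    dense_biInter_of_isOpen
      (fun p _ => isOpen_ne_fun (continuous_const.inner continuous_id) continuous_const)
      (Set.toFinite _).countable (fun p hp => dense_setOf_inner_ne_zero (hw p hp))
  refine hdense.mono fun x hx i j hij => by_contra fun hne => ?_
  refine Set.mem_iInter₂.1 hx (i, j) hne ?_
  rw [div_eq_div_iff (hβ i) (hβ j)] at hij
  simp only [w, inner_sub_left, real_inner_smul_left]
  linarith

theorem Submodule.reflection_orthogonal_singleton_apply (α y : E) :
    (ℝ ∙ α)ᗮ.reflection y = y - (2 * ⟪α, y⟫ / ‖α‖ ^ 2) • α := by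
  rw [reflection_orthogonal_apply, reflection_singleton_apply]
  module

theorem exists_perm_eq_smul_prod_eq_neg_one {F : Type*} [FunLike F E E]
    [LinearMapClass F ℝ E E] {S : Finset E} (σ : F) (hσ : Function.Involutive σ)
    (hS : ∀ γ ∈ S, -γ ∉ S) (hσS : ∀ γ ∈ S, σ γ ∈ S ∨ -σ γ ∈ S) {α : E} (hα : α ∈ S)
    (hσα : σ α = -α) (hfix : ∀ γ ∈ S, σ γ = -γ → γ = α) :
    ∃ (e : Equiv.Perm S) (c : S → ℝ), (∀ γ : S, σ γ = c γ • (e γ : E)) ∧ ∏ γ, c γ = -1 := by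
  classical
  let c : S → ℝ := fun γ => if σ γ ∈ S then 1 else -1
  have hc (γ : S) : c γ = 1 ∨ c γ = -1 := by unfold c; split_ifs <;> simp
  have hcc (γ : S) : c γ * c γ = 1 := by rcases hc γ with h | h <;> rw [h] <;> norm_num
  have hmem (γ : S) : c γ • σ γ ∈ S := by
    by_cases h : σ γ ∈ S
    · simp [c, h]
    · simpa [c, h] using (hσS γ γ.2).resolve_left h
  let τ : S → S := fun γ => ⟨c γ • σ γ, hmem γ⟩
  have hστ (γ : S) : σ (τ γ) = c γ • (γ : E) := by simp [τ, hσ γ]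
  have hcτ (γ : S) : c (τ γ) = c γ := by
    rcases hc γ with h | h
    · simp [c, hστ, h]
    · simp [c, hστ, h, hS γ γ.2]
  have hτ : Function.Involutive τ := fun γ => Subtype.ext <| by
    change c (τ γ) • σ (τ γ) = γ
    rw [hcτ, hστ, smul_smul, hcc, one_smul]
  set α' : S := ⟨α, hα⟩
  have hcα : c α' = -1 := by simp [c, α', hσα, hS α hα]
  have hτα : τ α' = α' := Subtype.ext <| by simp [τ, α', hcα, hσα]
  refine ⟨hτ.toPerm τ, c, fun γ => ?_, ?_⟩
  · change σ γ = c γ • (c γ • σ γ)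
    rw [smul_smul, hcc, one_smul]
  -- `τ` pairs off `S ∖ {α}` into orbits of equal sign, and its fixed points there have sign `1`.
  rw [← mul_prod_erase univ c (mem_univ α'), hcα, neg_one_mul, neg_inj]
  refine prod_involution (fun γ _ => τ γ) (fun γ _ => by rw [hcτ, hcc]) ?_ ?_ fun γ _ => hτ γ
  · intro γ hγ hne hfixγ
    refine ne_of_mem_erase hγ (Subtype.ext (hfix γ γ.2 ?_))
    conv_lhs => rw [← hfixγ]
    rw [hστ, (hc γ).resolve_left hne, neg_one_smul]
  · intro γ hγ
    refine mem_erase.2 ⟨fun h => ne_of_mem_erase hγ ?_, mem_univ _⟩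
    rw [← hτ γ, h, hτα]

section Laplacian

variable [DecidableEq ι]

theorem hasFDerivAt_finsetProd_inner (s : Finset ι) (v : ι → E) (x : E) :
    HasFDerivAt (fun z => ∏ i ∈ s, ⟪v i, z⟫)
      (∑ i ∈ s, (∏ j ∈ s.erase i, ⟪v j, x⟫) • innerSL ℝ (v i)) x :=
  HasFDerivAt.finsetProd fun i _ => (innerSL ℝ (v i)).hasFDerivAt

theorem fderiv_finsetProd_inner_apply (s : Finset ι) (v : ι → E) (x u : E) :
    fderiv ℝ (fun z => ∏ i ∈ s, ⟪v i, z⟫) x u = ∑ i ∈ s, ⟪v i, u⟫ * ∏ j ∈ s.erase i, ⟪v j, x⟫ := by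
  simp [(hasFDerivAt_finsetProd_inner s v x).fderiv, mul_comm]

theorem fderiv_fderiv_finsetProd_inner_apply (s : Finset ι) (v : ι → E) (x u w : E) :
    fderiv ℝ (fun y => fderiv ℝ (fun z => ∏ i ∈ s, ⟪v i, z⟫) y u) x w =
      ∑ i ∈ s, ∑ j ∈ s.erase i, ⟪v i, u⟫ * ⟪v j, w⟫ * ∏ k ∈ (s.erase i).erase j, ⟪v k, x⟫ := by
  simp_rw [fderiv_finsetProd_inner_apply]
  have := HasFDerivAt.fun_sum fun i (_ : i ∈ s) =>
    (hasFDerivAt_finsetProd_inner (s.erase i) v x).const_mul ⟪v i, u⟫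
  simp [this.fderiv, mul_sum, mul_assoc, mul_comm]

variable [Fintype ι]

noncomputable def laplacianProdInner (v : ι → E) (x : E) : ℝ :=
  ∑ i, ∑ j ∈ univ.erase i, ⟪v i, v j⟫ * ∏ k ∈ (univ.erase i).erase j, ⟪v k, x⟫

theorem OrthonormalBasis.sum_fderiv_fderiv_prod_inner {κ : Type*} [Fintype κ]
    (b : OrthonormalBasis κ ℝ E) (v : ι → E) (x : E) :
    ∑ k, fderiv ℝ (fun y => fderiv ℝ (fun z => ∏ i, ⟪v i, z⟫) y (b k)) x (b k) =
      laplacianProdInner v x := by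
  simp_rw [fderiv_fderiv_finsetProd_inner_apply, laplacianProdInner]
  rw [sum_comm]
  refine sum_congr rfl fun i _ => ?_
  rw [sum_comm]
  refine sum_congr rfl fun j _ => ?_
  rw [← b.sum_inner_mul_inner, sum_mul]
  refine sum_congr rfl fun k _ => ?_
  rw [real_inner_comm (b k) (v j)]

theorem laplacianProdInner_comp_perm (e : Equiv.Perm ι) (v : ι → E) (x : E) :
    laplacianProdInner (fun i => v (e i)) x = laplacianProdInner v x := by
  unfold laplacianProdInner
  refine Fintype.sum_equiv e _ _ fun i => ?_
  have hmap (s : Finset ι) (a : ι) :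
      (s.map e.toEmbedding).erase (e a) = (s.erase a).map e.toEmbedding :=
    (map_erase e.toEmbedding s a).symm
  conv_rhs => rw [← map_univ_equiv e, hmap, sum_map]
  refine sum_congr rfl fun j _ => ?_
  rw [← map_erase, prod_map]
  rfl

theorem laplacianProdInner_smul (c : ι → ℝ) (v : ι → E) (x : E) :
    laplacianProdInner (fun i => c i • v i) x = (∏ i, c i) * laplacianProdInner v x := by
  unfold laplacianProdInner
  rw [mul_sum]
  refine sum_congr rfl fun i _ => ?_
  rw [mul_sum]
  refine sum_congr rfl fun j hj => ?_
  simp_rw [real_inner_smul_left, real_inner_smul_right, prod_mul_distrib,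
    ← mul_prod_erase _ c (mem_univ i), ← mul_prod_erase _ c hj]
  ring

theorem laplacianProdInner_map_linearIsometry {F : Type*} [NormedAddCommGroup F]
    [InnerProductSpace ℝ F] (σ : E →ₗᵢ[ℝ] F) (v : ι → E) (x : E) :
    laplacianProdInner (fun i => σ (v i)) (σ x) = laplacianProdInner v x := by
  simp only [laplacianProdInner, LinearIsometry.inner_map_map]

theorem laplacianProdInner_eq_prod_mul_of_map_eq_smul (σ : E →ₗᵢ[ℝ] E) (e : Equiv.Perm ι)
    (c : ι → ℝ) {v : ι → E} (h : ∀ i, σ (v i) = c i • v (e i)) (x : E) :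
    laplacianProdInner v x = (∏ i, c i) * laplacianProdInner v (σ x) := by
  rw [← laplacianProdInner_map_linearIsometry σ v x]
  simp_rw [h]
  rw [laplacianProdInner_smul, laplacianProdInner_comp_perm e v]

theorem exists_natDegree_le_eval_eq_laplacianProdInner (v : ι → E) (x β : E) :
    ∃ G : ℝ[X], G.natDegree ≤ Fintype.card ι - 2 ∧
      ∀ r : ℝ, G.eval r = laplacianProdInner v (x + r • β) := by
  refine ⟨∑ i, ∑ j ∈ univ.erase i, C ⟪v i, v j⟫ *
    ∏ k ∈ (univ.erase i).erase j, (C ⟪v k, β⟫ * X + C ⟪v k, x⟫), ?_, fun r => ?_⟩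
  · refine natDegree_sum_le_of_forall_le _ _ fun i _ => natDegree_sum_le_of_forall_le _ _
      fun j hj => (natDegree_C_mul_le _ _).trans ((natDegree_prod_le _ _).trans ?_)
    refine (sum_le_card_nsmul _ _ 1 fun k _ => natDegree_linear_le).trans_eq ?_
    rw [smul_eq_mul, mul_one, card_erase_of_mem hj, card_erase_of_mem (mem_univ i), card_univ,
      Nat.sub_sub]
  · simp only [laplacianProdInner, eval_finsetSum, eval_mul, eval_prod, eval_add, eval_C, eval_X,
      inner_add_right, real_inner_smul_right]
    simp only [add_comm, mul_comm]

theorem laplacianProdInner_eq_zero_of_injective {v : ι → E} {β : E} (hβ : ∀ i, ⟪v i, β⟫ ≠ 0)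
    (hzero : ∀ i y, ⟪v i, y⟫ = 0 → laplacianProdInner v y = 0) {x : E}
    (hx : Function.Injective fun i => ⟪v i, x⟫ / ⟪v i, β⟫) :
    laplacianProdInner v x = 0 := by
  cases isEmpty_or_nonempty ι
  · simp [laplacianProdInner]
  obtain ⟨G, hdeg, hG⟩ := exists_natDegree_le_eval_eq_laplacianProdInner v x β
  have hroot (i : ι) : G.eval (-(⟪v i, x⟫ / ⟪v i, β⟫)) = 0 := by
    refine (hG _).trans (hzero i _ ?_)
    rw [inner_add_right, real_inner_smul_right, neg_mul, div_mul_cancel₀ _ (hβ i), add_neg_cancel]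
  have hG0 : G = 0 := eq_zero_of_natDegree_lt_card_of_eval_eq_zero G (neg_injective.comp hx) hroot
    (hdeg.trans_lt (Nat.sub_lt Fintype.card_pos two_pos))
  simpa [hG0] using (hG 0).symm

theorem laplacianProdInner_eq_zero [CompleteSpace E] {v : ι → E} {β : E}
    (hβ : ∀ i, ⟪v i, β⟫ ≠ 0) (hv : ∀ i j (c : ℝ), v i = c • v j → i = j)
    (hzero : ∀ i y, ⟪v i, y⟫ = 0 → laplacianProdInner v y = 0) (x : E) :
    laplacianProdInner v x = 0 := by
  have hcont : Continuous (laplacianProdInner v) := by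
    unfold laplacianProdInner
    fun_prop
  exact congrFun (hcont.ext_on (dense_setOf_injective_inner_div hβ hv) continuous_const
    fun y hy => laplacianProdInner_eq_zero_of_injective hβ hzero hy) x

end Laplacian

section RootSystem

variable [DecidableEq E] {S : Finset E}

theorem laplacianProdInner_coe_eq_zero_of_inner_eq_zero
    (hprop : ∀ γ ∈ S, ∀ δ ∈ S, ∀ c : ℝ, γ = c • δ → c = 1)
    (hrefl : ∀ α ∈ S, ∀ γ ∈ S, (ℝ ∙ α)ᗮ.reflection γ ∈ S ∨ -(ℝ ∙ α)ᗮ.reflection γ ∈ S)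
    {α : E} (hα : α ∈ S) {y : E} (hy : ⟪α, y⟫ = 0) :
    laplacianProdInner (fun γ : S => (γ : E)) y = 0 := by
  have hS : ∀ γ ∈ S, -γ ∉ S := fun γ hγ hγ' =>
    absurd (hprop _ hγ' γ hγ (-1) (neg_one_smul ℝ γ).symm) (by norm_num)
  have hfix : ∀ γ ∈ S, (ℝ ∙ α)ᗮ.reflection γ = -γ → γ = α := by
    intro γ hγ h
    rw [Submodule.reflection_orthogonal_apply, neg_inj, Submodule.reflection_eq_self_iff,
      Submodule.mem_span_singleton] at h
    obtain ⟨c, rfl⟩ := h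
    rw [hprop _ hγ α hα c rfl, one_smul]
  obtain ⟨e, c, hσ, hc⟩ := exists_perm_eq_smul_prod_eq_neg_one _
    (Submodule.reflection_reflection _) hS (hrefl α hα) hα
    (Submodule.reflection_orthogonalComplement_singleton_eq_neg α) hfix
  have := laplacianProdInner_eq_prod_mul_of_map_eq_smul (ℝ ∙ α)ᗮ.reflection.toLinearIsometry
    e c hσ y
  rw [hc, LinearIsometryEquiv.coe_toLinearIsometry, Submodule.reflection_mem_subspace_eq_self
    (Submodule.mem_orthogonal_singleton_iff_inner_right.2 hy)] at this
  linarith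

theorem laplacianProdInner_coe_eq_zero [CompleteSpace E]
    (hprop : ∀ γ ∈ S, ∀ δ ∈ S, ∀ c : ℝ, γ = c • δ → c = 1)
    (hrefl : ∀ α ∈ S, ∀ γ ∈ S, (ℝ ∙ α)ᗮ.reflection γ ∈ S ∨ -(ℝ ∙ α)ᗮ.reflection γ ∈ S)
    {β : E} (hβ : ∀ γ ∈ S, ⟪γ, β⟫ ≠ 0) (x : E) :
    laplacianProdInner (fun γ : S => (γ : E)) x = 0 :=
  laplacianProdInner_eq_zero (v := fun γ : S => (γ : E)) (fun γ => hβ γ γ.2)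
    (fun γ δ c h => Subtype.ext (by rw [h, hprop _ γ.2 δ δ.2 c h, one_smul]))
    (fun γ _ hy => laplacianProdInner_coe_eq_zero_of_inner_eq_zero hprop hrefl γ.2 hy) x

end RootSystem

theorem stmt_10_general {d : ℕ} (R Rp : Finset (EuclideanSpace ℝ (Fin d)))
    -- `R` is a reduced root system:
    (hR1 : ∀ α ∈ R, ∀ c : ℝ, c • α ∈ R → c = 1 ∨ c = -1)
    (hR2 : ∀ α ∈ R, ∀ y ∈ R, y - (2 * ⟪α, y⟫ / ‖α‖ ^ 2) • α ∈ R)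
    -- `Rp` is a positive system: `R = Rp ⊔ (-Rp)` separated by a hyperplane
    (hsplit : ∀ α : EuclideanSpace ℝ (Fin d), α ∈ R ↔ (α ∈ Rp ∨ -α ∈ Rp))
    (hdisj : ∀ α ∈ Rp, -α ∉ Rp)
    (hβ : ∃ β : EuclideanSpace ℝ (Fin d), β ∉ R ∧ ∀ α ∈ Rp, 0 < ⟪β, α⟫) :
    -- the polynomial `π(x) = ∏_{α ∈ Rp} ⟨α, x⟩` is `Δ`-harmonic
    ∀ x : EuclideanSpace ℝ (Fin d),
      ∑ i : Fin d,
        fderiv ℝ (fun y : EuclideanSpace ℝ (Fin d) =>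
            fderiv ℝ (fun z : EuclideanSpace ℝ (Fin d) => ∏ α ∈ Rp, ⟪α, z⟫) y
              (EuclideanSpace.single i 1)) x (EuclideanSpace.single i 1) = 0 := by
  classical
  obtain ⟨β, -, hβ⟩ := hβ
  have hmem : ∀ γ ∈ Rp, γ ∈ R := fun γ hγ => (hsplit γ).2 (.inl hγ)
  have hprop : ∀ γ ∈ Rp, ∀ δ ∈ Rp, ∀ c : ℝ, γ = c • δ → c = 1 := by
    intro γ hγ δ hδ c h
    refine (hR1 δ (hmem δ hδ) c (h ▸ hmem γ hγ)).resolve_right fun hc => hdisj δ hδ ?_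
    rw [hc, neg_one_smul] at h
    exact h ▸ hγ
  have hrefl : ∀ α ∈ Rp, ∀ γ ∈ Rp, (ℝ ∙ α)ᗮ.reflection γ ∈ Rp ∨ -(ℝ ∙ α)ᗮ.reflection γ ∈ Rp :=
    fun α hα γ hγ => by
      rw [Submodule.reflection_orthogonal_singleton_apply, ← hsplit]
      exact hR2 α (hmem α hα) γ (hmem γ hγ)
  intro x
  rw [show (fun z => ∏ α ∈ Rp, ⟪α, z⟫) = fun z => ∏ γ : Rp, ⟪(γ : EuclideanSpace ℝ (Fin d)), z⟫
    from funext fun z => (prod_coe_sort Rp _).symm]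
  simp_rw [← EuclideanSpace.basisFun_apply]
  rw [OrthonormalBasis.sum_fderiv_fderiv_prod_inner]
  exact laplacianProdInner_coe_eq_zero hprop hrefl
    (fun γ hγ => (real_inner_comm β γ ▸ hβ γ hγ).ne') x

theorem stmt_10 {d : ℕ} (R Rp : Finset (EuclideanSpace ℝ (Fin d)))
    -- `R` is a reduced root system:
    (hR0 : ∀ α ∈ R, α ≠ 0)
    (hR1 : ∀ α ∈ R, ∀ c : ℝ, c • α ∈ R → c = 1 ∨ c = -1)
    (hR1' : ∀ α ∈ R, -α ∈ R)
    (hR2 : ∀ α ∈ R, ∀ y ∈ R, y - (2 * ⟪α, y⟫ / ‖α‖ ^ 2) • α ∈ R)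
    -- `Rp` is a positive system: `R = Rp ⊔ (-Rp)` separated by a hyperplane
    (hsplit : ∀ α : EuclideanSpace ℝ (Fin d), α ∈ R ↔ (α ∈ Rp ∨ -α ∈ Rp))
    (hdisj : ∀ α ∈ Rp, -α ∉ Rp)
    (hβ : ∃ β : EuclideanSpace ℝ (Fin d), β ∉ R ∧ ∀ α ∈ Rp, 0 < ⟪β, α⟫) :
    -- the polynomial `π(x) = ∏_{α ∈ Rp} ⟨α, x⟩` is `Δ`-harmonic
    ∀ x : EuclideanSpace ℝ (Fin d),
      ∑ i : Fin d,
        fderiv ℝ (fun y : EuclideanSpace ℝ (Fin d) =>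
            fderiv ℝ (fun z : EuclideanSpace ℝ (Fin d) => ∏ α ∈ Rp, ⟪α, z⟫) y
              (EuclideanSpace.single i 1)) x (EuclideanSpace.single i 1) = 0 :=
  stmt_10_general R Rp hR1 hR2 hsplit hdisj hβ
end

section
/- Let $d>1$, let $R_+=R_+^1\cup R_+^2$ where $R_+^1=\{e_i-e_j:1\le i<j\le d\}\cup\{e_i+e_j:1\le i<j\le d\}$ and $R_+^2=\{e_i:1\le i\le d\}$ (the positive root system of type $B_d$), and let $k_1,k_2>0$ with $k(\alpha)=k_1$ for $\alpha\in R_+^1$ and $k(\alpha)=k_2$ for $\alpha\in R_+^2$. Then for every $x\in\mathbb{R}^d$ with $x_1>x_2>\cdots>x_d>0$ it holds that $\sum_{\alpha\in R_+}\frac{k(\alpha)|\alpha|^2}{\langle\alpha,x\rangle^2}=\sum_{\alpha\in R_+}\sum_{\beta\in R_+}\frac{k(\beta)\langle\alpha,\beta\rangle}{\langle\alpha,x\rangle\langle\beta,x\rangle}$. -/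
open scoped RealInnerProductSpace

/-- The standard basis vector `e_i` of `ℝ^d`. -/
noncomputable def eVec (d : ℕ) (i : Fin d) : EuclideanSpace ℝ (Fin d) :=
  EuclideanSpace.single i 1

/-!
Write `h_S(x) = ∑_{α ∈ S} α / ⟨α, x⟩`. The right-hand side is
`⟨h_{R₊}, k₁ h_{R₊¹} + k₂ h_{R₊²}⟩ = k₁ |h_{R₊¹}|² + k₂ |h_{R₊²}|² + (k₁ + k₂) ⟨h_{R₊¹}, h_{R₊²}⟩`,
and the claim is that this equals its diagonal part `∑ k(α) |α|² / ⟨α, x⟩²`.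
In coordinates `h_{R₊²}(x)_i = 1 / x_i` and `h_{R₊¹}(x)_i = ∑_{j ≠ i} 2 x_i / (x_i² - x_j²)`.
So `⟨h_{R₊¹}, h_{R₊²}⟩ = 2 ∑_{i ≠ j} 1 / (x_i² - x_j²) = 0` by antisymmetry, and with `b_i = x_i²`,
`|h_{R₊¹}|² = 4 ∑_i b_i (∑_{j ≠ i} 1 / (b_i - b_j))² = 4 ∑_{i ≠ j} b_i / (b_i - b_j)²`, the cross
terms cancelling by the partial-fraction identity `∑_cyc u / ((u - v) (u - w)) = 0`. Symmetrising in
`i, j` gives `∑_{i < j} (2 / (x_i - x_j)² + 2 / (x_i + x_j)²)`, the diagonal part over `R₊¹`.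
-/

open Finset

lemma two_mul_div_sq_sub_sq {K : Type*} [Field K] {a c : K} (h₁ : a - c ≠ 0) (h₂ : a + c ≠ 0) :
    2 * a / (a ^ 2 - c ^ 2) = (a - c)⁻¹ + (a + c)⁻¹ := by
  rw [inv_add_inv h₁ h₂, sq_sub_sq, mul_comm (a + c)]
  ring

lemma four_mul_div_sq_add_four_mul_div_sq {K : Type*} [Field K] {a c : K} (h₁ : a - c ≠ 0)
    (h₂ : a + c ≠ 0) :
    4 * a ^ 2 / (a ^ 2 - c ^ 2) ^ 2 + 4 * c ^ 2 / (c ^ 2 - a ^ 2) ^ 2 =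
      2 / (a - c) ^ 2 + 2 / (a + c) ^ 2 := by
  rw [show c ^ 2 - a ^ 2 = -(a ^ 2 - c ^ 2) by ring, neg_sq, sq_sub_sq, mul_comm (a + c)]
  field_simp
  ring

section FiniteSums

variable {K : Type*} [Field K] [CharZero K] {ι : Type*} [Fintype ι]

lemma sum_sum_eq_zero_of_antisymm {f : ι → ι → K} (hf : ∀ i j, f j i = -f i j) :
    ∑ i, ∑ j, f i j = 0 := by
  have : ∑ i, ∑ j, f i j = ∑ i, ∑ j, -f i j := by
    rw [sum_comm]
    exact sum_congr rfl fun i _ => sum_congr rfl fun j _ => hf i j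
  simp only [sum_neg_distrib] at this
  linear_combination this / 2

lemma sum_sum_sum_eq_zero_of_cyclic {f : ι → ι → ι → K}
    (hf : ∀ i j l, f i j l + f j l i + f l i j = 0) : ∑ i, ∑ j, ∑ l, f i j l = 0 := by
  have h₁ : ∑ i, ∑ j, ∑ l, f j l i = ∑ i, ∑ j, ∑ l, f i j l := by
    rw [sum_comm]; exact sum_congr rfl fun _ _ => sum_comm
  have h₂ : ∑ i, ∑ j, ∑ l, f l i j = ∑ i, ∑ j, ∑ l, f i j l := by
    rw [sum_congr rfl fun _ _ => sum_comm, sum_comm]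
  have : ∑ i, ∑ j, ∑ l, (f i j l + f j l i + f l i j) = 0 := by simp [hf]
  simp only [sum_add_distrib, h₁, h₂] at this
  linear_combination this / 3

lemma sum_sum_inv_sub_eq_zero (b : ι → K) : ∑ i, ∑ j, (b i - b j)⁻¹ = 0 :=
  sum_sum_eq_zero_of_antisymm fun i j => by rw [← neg_sub, inv_neg]

lemma sum_mul_sum_inv_sub_sq [DecidableEq ι] {b : ι → K} (hb : Function.Injective b) :
    ∑ i, b i * (∑ j, (b i - b j)⁻¹) ^ 2 = ∑ i, ∑ j, b i / (b i - b j) ^ 2 := by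
  set E : ι → ι → ι → K := fun i j l => if j = l then 0 else b i * (b i - b j)⁻¹ * (b i - b l)⁻¹
  -- `∑_cyc u / ((u - v) (u - w)) = 0`; degenerate triples vanish because `(b i - b i)⁻¹ = 0`.
  have hE : ∀ i j l, E i j l + E j l i + E l i j = 0 := by
    intro i j l
    by_cases hij : i = j
    · subst hij; simp [E]
    by_cases hjl : j = l
    · subst hjl; simp [E]
    by_cases hli : l = i
    · subst hli; simp [E]
    have hne : ∀ {u v}, u ≠ v → b u - b v ≠ 0 := fun h => sub_ne_zero.2 (hb.ne h)
    simp only [E, if_neg hjl, if_neg hli, if_neg hij]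
    field_simp [hne hij, hne hjl, hne hli, hne (Ne.symm hij), hne (Ne.symm hjl),
      hne (Ne.symm hli)]
    ring
  have hsplit : ∀ i j l, b i * (b i - b j)⁻¹ * (b i - b l)⁻¹ =
      E i j l + if j = l then b i / (b i - b j) ^ 2 else 0 := by
    intro i j l
    simp only [E]
    split_ifs with h
    · subst h; simp [div_eq_mul_inv, sq, mul_assoc]
    · ring
  calc ∑ i, b i * (∑ j, (b i - b j)⁻¹) ^ 2
      = ∑ i, ∑ j, ∑ l, b i * (b i - b j)⁻¹ * (b i - b l)⁻¹ := by
        refine sum_congr rfl fun i _ => ?_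
        rw [sq, sum_mul_sum, mul_sum]
        simp only [mul_sum, mul_assoc]
    _ = ∑ i, ∑ j, ∑ l, E i j l + ∑ i, ∑ j, b i / (b i - b j) ^ 2 := by
        simp only [hsplit, sum_add_distrib, sum_ite_eq, mem_univ, if_true]
    _ = _ := by rw [sum_sum_sum_eq_zero_of_cyclic hE, zero_add]

end FiniteSums

lemma sum_filter_lt_add_swap {ι M : Type*} [Fintype ι] [LinearOrder ι] [AddCommMonoid M]
    {F : ι → ι → M} (hF : ∀ i, F i i = 0) :
    ∑ p ∈ univ.filter (fun p : ι × ι => p.1 < p.2), (F p.1 p.2 + F p.2 p.1) = ∑ i, ∑ j, F i j := by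
  have hswap : ∑ p ∈ univ.filter (fun p : ι × ι => p.1 < p.2), F p.2 p.1 =
      ∑ p ∈ univ.filter (fun p : ι × ι => ¬p.1 < p.2), F p.1 p.2 := by
    rw [sum_filter, sum_filter]
    refine Fintype.sum_equiv (Equiv.prodComm ι ι) _ _ fun p => ?_
    rcases lt_trichotomy p.1 p.2 with h | h | h
    · simp [h, h.not_gt]
    · simp [h, hF]
    · simp [h, h.not_gt]
  rw [sum_add_distrib, hswap, sum_filter_add_sum_filter_not, ← Fintype.sum_prod_type']

section InnerProductSpace

variable {E : Type*} [NormedAddCommGroup E] [InnerProductSpace ℝ E]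

/-- The gradient of `log ∏_{α ∈ s} ⟨α, x⟩`. -/
noncomputable def gradLogProd (s : Finset E) (x : E) : E := ∑ α ∈ s, ⟪α, x⟫⁻¹ • α

lemma sum_sum_inner_div_eq_inner (s : Finset E) (k : E → ℝ) (x : E) :
    ∑ α ∈ s, ∑ β ∈ s, k β * ⟪α, β⟫ / (⟪α, x⟫ * ⟪β, x⟫) =
      ⟪gradLogProd s x, ∑ β ∈ s, (k β * ⟪β, x⟫⁻¹) • β⟫ := by
  rw [gradLogProd, sum_inner]
  refine sum_congr rfl fun α _ => ?_
  rw [real_inner_smul_left, inner_sum, mul_sum]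
  refine sum_congr rfl fun β _ => ?_
  rw [real_inner_smul_right, div_eq_mul_inv, mul_inv]
  ring

lemma sum_sum_inner_div_union [DecidableEq E] {s t : Finset E} (hst : Disjoint s t)
    {k : E → ℝ} {c c' : ℝ} (hs : ∀ α ∈ s, k α = c) (ht : ∀ α ∈ t, k α = c') (x : E) :
    ∑ α ∈ s ∪ t, ∑ β ∈ s ∪ t, k β * ⟪α, β⟫ / (⟪α, x⟫ * ⟪β, x⟫) =
      c * ‖gradLogProd s x‖ ^ 2 + c' * ‖gradLogProd t x‖ ^ 2 +
        (c + c') * ⟪gradLogProd s x, gradLogProd t x⟫ := by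
  have hk : ∑ β ∈ s ∪ t, (k β * ⟪β, x⟫⁻¹) • β = c • gradLogProd s x + c' • gradLogProd t x := by
    rw [sum_union hst, gradLogProd, gradLogProd, smul_sum, smul_sum]
    congr 1
    · exact sum_congr rfl fun α hα => by rw [hs α hα, mul_smul]
    · exact sum_congr rfl fun α hα => by rw [ht α hα, mul_smul]
  have hG : gradLogProd (s ∪ t) x = gradLogProd s x + gradLogProd t x := sum_union hst
  rw [sum_sum_inner_div_eq_inner, hk, hG]
  simp only [inner_add_left, inner_add_right, real_inner_smul_right, real_inner_self_eq_norm_sq,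
    real_inner_comm (gradLogProd s x)]
  ring

lemma sum_mul_norm_sq_div_union [DecidableEq E] {s t : Finset E} (hst : Disjoint s t)
    {k : E → ℝ} {c c' : ℝ} (hs : ∀ α ∈ s, k α = c) (ht : ∀ α ∈ t, k α = c') (x : E) :
    ∑ α ∈ s ∪ t, k α * ‖α‖ ^ 2 / ⟪α, x⟫ ^ 2 =
      c * ∑ α ∈ s, ‖α‖ ^ 2 / ⟪α, x⟫ ^ 2 + c' * ∑ α ∈ t, ‖α‖ ^ 2 / ⟪α, x⟫ ^ 2 := by
  rw [sum_union hst, mul_sum, mul_sum]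
  congr 1
  · exact sum_congr rfl fun α hα => by rw [hs α hα, mul_div_assoc]
  · exact sum_congr rfl fun α hα => by rw [ht α hα, mul_div_assoc]

end InnerProductSpace

section RootSystemB

variable {d : ℕ}

def posPairs (d : ℕ) : Finset (Fin d × Fin d) := univ.filter fun p => p.1 < p.2

-- `R₊¹` (the positive roots of `D_d`) and `R₊²` in the notation of the statement.
noncomputable def posRootsD (d : ℕ) [DecidableEq (EuclideanSpace ℝ (Fin d))] :
    Finset (EuclideanSpace ℝ (Fin d)) :=
  (posPairs d).image (fun p => eVec d p.1 - eVec d p.2) ∪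
    (posPairs d).image (fun p => eVec d p.1 + eVec d p.2)

noncomputable def shortPosRootsB (d : ℕ) [DecidableEq (EuclideanSpace ℝ (Fin d))] :
    Finset (EuclideanSpace ℝ (Fin d)) :=
  univ.image (eVec d)

lemma eVec_apply (i j : Fin d) : eVec d i j = if j = i then 1 else 0 := by
  simp [eVec, PiLp.single_apply]

lemma inner_eVec_left (i : Fin d) (y : EuclideanSpace ℝ (Fin d)) : ⟪eVec d i, y⟫ = y i := by
  simp [eVec, EuclideanSpace.inner_single_left]

lemma sum_smul_eVec (c : Fin d → ℝ) : ∑ i, c i • eVec d i = WithLp.toLp 2 c := by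
  ext j
  simp [eVec_apply]

lemma sum_eVec_apply (i : Fin d) : ∑ j, eVec d i j = 1 := by
  simp [eVec_apply]

lemma norm_eVec (i : Fin d) : ‖eVec d i‖ = 1 := by
  simp [eVec]

lemma norm_eVec_sub_eVec_sq {i j : Fin d} (hij : i ≠ j) : ‖eVec d i - eVec d j‖ ^ 2 = 2 := by
  rw [← real_inner_self_eq_norm_sq, inner_sub_left, inner_eVec_left, inner_eVec_left]
  norm_num [eVec_apply, hij, hij.symm]

lemma norm_eVec_add_eVec_sq {i j : Fin d} (hij : i ≠ j) : ‖eVec d i + eVec d j‖ ^ 2 = 2 := by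
  rw [← real_inner_self_eq_norm_sq, inner_add_left, inner_eVec_left, inner_eVec_left]
  norm_num [eVec_apply, hij, hij.symm]

lemma eVec_injective : Function.Injective (eVec d) := by
  intro i j h
  simpa [eVec_apply] using congr($h i)

lemma eVec_add_eVec_eq_iff {i j k l : Fin d} :
    eVec d i + eVec d j = eVec d k + eVec d l ↔ i = k ∧ j = l ∨ i = l ∧ j = k := by
  simp only [eVec, ← PiLp.toLp_single, ← WithLp.toLp_add, (WithLp.toLp_injective 2).eq_iff]
  rw [Pi.single_add_single_eq_single_add_single one_ne_zero one_ne_zero]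
  norm_num

lemma eVec_sub_eVec_eq_iff {i j k l : Fin d} (hij : i ≠ j) :
    eVec d i - eVec d j = eVec d k - eVec d l ↔ i = k ∧ j = l := by
  rw [sub_eq_sub_iff_add_eq_add, eVec_add_eVec_eq_iff]
  grind

variable [DecidableEq (EuclideanSpace ℝ (Fin d))]

lemma sum_posRootsD {M : Type*} [AddCommMonoid M] (f : EuclideanSpace ℝ (Fin d) → M) :
    ∑ α ∈ posRootsD d, f α =
      ∑ p ∈ posPairs d, (f (eVec d p.1 - eVec d p.2) + f (eVec d p.1 + eVec d p.2)) := by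
  -- The coordinate sum is `0` on `e_i - e_j`, `2` on `e_i + e_j` and `1` on `e_i`.
  have hdisj : Disjoint ((posPairs d).image fun p => eVec d p.1 - eVec d p.2)
      ((posPairs d).image fun p => eVec d p.1 + eVec d p.2) := by
    simp only [disjoint_left, mem_image, not_exists, not_and]
    rintro _ ⟨p, -, rfl⟩ q - h
    have := congr(∑ m, $h m)
    simp only [PiLp.sub_apply, PiLp.add_apply, sum_sub_distrib, sum_add_distrib,
      sum_eVec_apply] at this
    norm_num at this
  have hsub : Set.InjOn (fun p : Fin d × Fin d => eVec d p.1 - eVec d p.2) (posPairs d) := by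
    rintro p hp q - h
    simp only [posPairs, coe_filter, mem_univ, true_and, Set.mem_ofPred_eq] at hp
    exact Prod.ext_iff.2 ((eVec_sub_eVec_eq_iff hp.ne).1 h)
  have hadd : Set.InjOn (fun p : Fin d × Fin d => eVec d p.1 + eVec d p.2) (posPairs d) := by
    rintro p hp q hq h
    simp only [posPairs, coe_filter, mem_univ, true_and, Set.mem_ofPred_eq] at hp hq
    rcases eVec_add_eVec_eq_iff.1 h with h' | ⟨h₁, h₂⟩
    · exact Prod.ext_iff.2 h'
    · exact absurd (h₁ ▸ h₂ ▸ hq) hp.not_gt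
  rw [posRootsD, sum_union hdisj, sum_image hsub, sum_image hadd, sum_add_distrib]

lemma disjoint_posRootsD_shortPosRootsB : Disjoint (posRootsD d) (shortPosRootsB d) := by
  simp only [posRootsD, shortPosRootsB, disjoint_left, mem_union, mem_image, mem_univ, true_and,
    not_exists]
  rintro _ (⟨p, -, rfl⟩ | ⟨p, -, rfl⟩) i h <;>
  · have := congr(∑ m, $h m)
    simp only [PiLp.sub_apply, PiLp.add_apply, sum_sub_distrib, sum_add_distrib,
      sum_eVec_apply] at this
    norm_num at this

lemma gradLogProd_shortPosRootsB (x : EuclideanSpace ℝ (Fin d)) :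
    gradLogProd (shortPosRootsB d) x = WithLp.toLp 2 fun i => (x i)⁻¹ := by
  rw [gradLogProd, shortPosRootsB, sum_image fun i _ j _ h => eVec_injective h, ← sum_smul_eVec]
  simp only [inner_eVec_left]

-- The summand `j = i` is `0` since `x / 0 = 0`.
lemma gradLogProd_posRootsD {x : EuclideanSpace ℝ (Fin d)} (hx : ∀ i, 0 < x i)
    (hinj : Function.Injective x) :
    gradLogProd (posRootsD d) x = WithLp.toLp 2 fun i => ∑ j, 2 * x i / (x i ^ 2 - x j ^ 2) := by
  have hpair : ∀ i j, i ≠ j → (x i - x j)⁻¹ • (eVec d i - eVec d j) +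
      (x i + x j)⁻¹ • (eVec d i + eVec d j) =
        (2 * x i / (x i ^ 2 - x j ^ 2)) • eVec d i +
          (2 * x j / (x j ^ 2 - x i ^ 2)) • eVec d j := by
    intro i j hij
    have h₁ : x i - x j ≠ 0 := sub_ne_zero.2 (hinj.ne hij)
    have h₂ : x i + x j ≠ 0 := (add_pos (hx i) (hx j)).ne'
    rw [two_mul_div_sq_sub_sq h₁ h₂, two_mul_div_sq_sub_sq (by rwa [← neg_sub, neg_ne_zero])
      (by rwa [add_comm]), ← neg_sub, inv_neg, add_comm (x j)]
    module
  rw [gradLogProd, sum_posRootsD, ← sum_smul_eVec]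
  simp only [sum_smul, inner_sub_left, inner_add_left, inner_eVec_left]
  rw [← sum_filter_lt_add_swap (F := fun i j => (2 * x i / (x i ^ 2 - x j ^ 2)) • eVec d i)
    (by simp)]
  exact sum_congr rfl fun p hp => hpair p.1 p.2 (mem_filter.1 hp).2.ne

lemma inner_gradLogProd_posRootsD_shortPosRootsB {x : EuclideanSpace ℝ (Fin d)}
    (hx : ∀ i, 0 < x i) (hinj : Function.Injective x) :
    ⟪gradLogProd (posRootsD d) x, gradLogProd (shortPosRootsB d) x⟫ = 0 := by
  rw [gradLogProd_posRootsD hx hinj, gradLogProd_shortPosRootsB, EuclideanSpace.inner_toLp_toLp]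
  have hterm : ∀ i j, (x i)⁻¹ * (2 * x i / (x i ^ 2 - x j ^ 2)) = 2 * (x i ^ 2 - x j ^ 2)⁻¹ := by
    intro i j
    field_simp [(hx i).ne']
  calc ∑ i, (x i)⁻¹ * ∑ j, 2 * x i / (x i ^ 2 - x j ^ 2)
      = 2 * ∑ i, ∑ j, (x i ^ 2 - x j ^ 2)⁻¹ := by simp only [mul_sum, hterm]
    _ = 0 := by rw [sum_sum_inv_sub_eq_zero fun i => x i ^ 2, mul_zero]

lemma norm_sq_gradLogProd_shortPosRootsB (x : EuclideanSpace ℝ (Fin d)) :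
    ‖gradLogProd (shortPosRootsB d) x‖ ^ 2 = ∑ α ∈ shortPosRootsB d, ‖α‖ ^ 2 / ⟪α, x⟫ ^ 2 := by
  rw [gradLogProd_shortPosRootsB, EuclideanSpace.real_norm_sq_eq, shortPosRootsB,
    sum_image fun i _ j _ h => eVec_injective h]
  simp [inner_eVec_left, norm_eVec]

lemma norm_sq_gradLogProd_posRootsD {x : EuclideanSpace ℝ (Fin d)}
    (hx : ∀ i, 0 < x i) (hinj : Function.Injective x) :
    ‖gradLogProd (posRootsD d) x‖ ^ 2 = ∑ α ∈ posRootsD d, ‖α‖ ^ 2 / ⟪α, x⟫ ^ 2 := by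
  set b : Fin d → ℝ := fun i => x i ^ 2
  have hb : Function.Injective b := fun i j h => hinj ((sq_eq_sq₀ (hx i).le (hx j).le).1 h)
  rw [gradLogProd_posRootsD hx hinj, EuclideanSpace.real_norm_sq_eq, sum_posRootsD]
  calc ∑ i, (∑ j, 2 * x i / (x i ^ 2 - x j ^ 2)) ^ 2
      = 4 * ∑ i, b i * (∑ j, (b i - b j)⁻¹) ^ 2 := by
        rw [mul_sum]
        refine sum_congr rfl fun i _ => ?_
        simp only [b, div_eq_mul_inv, ← mul_sum]
        ring
    _ = ∑ i, ∑ j, 4 * b i / (b i - b j) ^ 2 := by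
        simp only [sum_mul_sum_inv_sub_sq hb, mul_sum, mul_div_assoc]
    _ = ∑ p ∈ posPairs d, (4 * b p.1 / (b p.1 - b p.2) ^ 2 + 4 * b p.2 / (b p.2 - b p.1) ^ 2) :=
        (sum_filter_lt_add_swap (by simp)).symm
    _ = _ := by
        refine sum_congr rfl fun p hp => ?_
        have hp : p.1 ≠ p.2 := (mem_filter.1 hp).2.ne
        rw [norm_eVec_sub_eVec_sq hp, norm_eVec_add_eVec_sq hp, inner_sub_left, inner_add_left,
          inner_eVec_left, inner_eVec_left]
        exact four_mul_div_sq_add_four_mul_div_sq (sub_ne_zero.2 (hinj.ne hp))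
          (add_pos (hx p.1) (hx p.2)).ne'

end RootSystemB

theorem stmt_13_general {d : ℕ} [DecidableEq (EuclideanSpace ℝ (Fin d))]
    (k1 k2 : ℝ)
    (Rp1 Rp2 : Finset (EuclideanSpace ℝ (Fin d)))
    -- `Rp1 = {e_i - e_j : i < j} ∪ {e_i + e_j : i < j}`
    (hRp1 : Rp1 =
      ((Finset.univ.filter fun p : Fin d × Fin d => p.1 < p.2).image
        fun p => eVec d p.1 - eVec d p.2) ∪
      ((Finset.univ.filter fun p : Fin d × Fin d => p.1 < p.2).image
        fun p => eVec d p.1 + eVec d p.2))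
    -- `Rp2 = {e_i : 1 ≤ i ≤ d}`
    (hRp2 : Rp2 = Finset.univ.image (eVec d))
    -- the multiplicity `k` equals `k1` on `Rp1` and `k2` on `Rp2`
    (k : EuclideanSpace ℝ (Fin d) → ℝ)
    (hK1 : ∀ α ∈ Rp1, k α = k1) (hK2 : ∀ α ∈ Rp2, k α = k2)
    (x : EuclideanSpace ℝ (Fin d))
    (hmono : ∀ i j : Fin d, i < j → x j < x i) (hpos : ∀ i : Fin d, 0 < x i) :
    ∑ α ∈ Rp1 ∪ Rp2, k α * ‖α‖ ^ 2 / ⟪α, x⟫ ^ 2 =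
      ∑ α ∈ Rp1 ∪ Rp2, ∑ β ∈ Rp1 ∪ Rp2, k β * ⟪α, β⟫ / (⟪α, x⟫ * ⟪β, x⟫) := by
  obtain rfl : Rp1 = posRootsD d := hRp1
  obtain rfl : Rp2 = shortPosRootsB d := hRp2
  have hinj : Function.Injective x := StrictAnti.injective hmono
  rw [sum_mul_norm_sq_div_union disjoint_posRootsD_shortPosRootsB hK1 hK2,
    sum_sum_inner_div_union disjoint_posRootsD_shortPosRootsB hK1 hK2,
    norm_sq_gradLogProd_posRootsD hpos hinj, norm_sq_gradLogProd_shortPosRootsB,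
    inner_gradLogProd_posRootsD_shortPosRootsB hpos hinj, mul_zero, add_zero]

theorem stmt_13 {d : ℕ} (hd : 1 < d) [DecidableEq (EuclideanSpace ℝ (Fin d))]
    (k1 k2 : ℝ) (hk1 : 0 < k1) (hk2 : 0 < k2)
    (Rp1 Rp2 : Finset (EuclideanSpace ℝ (Fin d)))
    -- `Rp1 = {e_i - e_j : i < j} ∪ {e_i + e_j : i < j}`
    (hRp1 : Rp1 =
      ((Finset.univ.filter fun p : Fin d × Fin d => p.1 < p.2).image
        fun p => eVec d p.1 - eVec d p.2) ∪
      ((Finset.univ.filter fun p : Fin d × Fin d => p.1 < p.2).image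
        fun p => eVec d p.1 + eVec d p.2))
    -- `Rp2 = {e_i : 1 ≤ i ≤ d}`
    (hRp2 : Rp2 = Finset.univ.image (eVec d))
    -- the multiplicity `k` equals `k1` on `Rp1` and `k2` on `Rp2`
    (k : EuclideanSpace ℝ (Fin d) → ℝ)
    (hK1 : ∀ α ∈ Rp1, k α = k1) (hK2 : ∀ α ∈ Rp2, k α = k2)
    (x : EuclideanSpace ℝ (Fin d))
    (hmono : ∀ i j : Fin d, i < j → x j < x i) (hpos : ∀ i : Fin d, 0 < x i) :
    ∑ α ∈ Rp1 ∪ Rp2, k α * ‖α‖ ^ 2 / ⟪α, x⟫ ^ 2 =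
      ∑ α ∈ Rp1 ∪ Rp2, ∑ β ∈ Rp1 ∪ Rp2, k β * ⟪α, β⟫ / (⟪α, x⟫ * ⟪β, x⟫) :=
  stmt_13_general k1 k2 Rp1 Rp2 hRp1 hRp2 k hK1 hK2 x hmono hpos
end

section
/- Let $\theta\in[0,1/2)$ and let $e,e',g,g',S\in\mathbb{R}^d$ satisfy $\langle e,g\rangle\le 0$, $\langle e',g'\rangle\le 0$, and $e'=e+S+\theta g+(1-\theta)g'$. Then $|e'|^2\le|e|^2+2\langle e,S\rangle+\Big(1+\frac{\theta^2}{1-2\theta}\Big)|S|^2+(1-\theta)^2\big(|g|^2-|g'|^2\big)$. -/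
/-! The drift terms enter only through `⟪e, g⟫` and `⟪e', g'⟫`: writing
`e' - (1 - θ) • g' = e + (S + θ • g)` and expanding `‖e'‖²` around this vector produces
`2 (1 - θ) ⟪e', g'⟫ - (1 - θ)² ‖g'‖²`, and expanding `‖e + (S + θ • g)‖²` produces
`2 θ ⟪e, g⟫`; both inner products are nonpositive. The remaining cross term `2 θ ⟪S, g⟫` is
absorbed by Young's inequality with weight `1 - 2 θ`, which turns `θ² ‖g‖²` into
`(1 - θ)² ‖g‖²` at the cost of `θ² / (1 - 2 θ) ‖S‖²`. -/

open scoped RealInnerProductSpace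

section InnerProductSpace

variable {E : Type*} [NormedAddCommGroup E] [InnerProductSpace ℝ E]

theorem two_mul_inner_le_div_add_mul {ε : ℝ} (hε : 0 < ε) (x y : E) :
    2 * ⟪x, y⟫ ≤ ‖x‖ ^ 2 / ε + ε * ‖y‖ ^ 2 := by
  have hsq : ‖x‖ ^ 2 / ε + ε * ‖y‖ ^ 2 - 2 * ⟪x, y⟫ = ‖x - ε • y‖ ^ 2 / ε := by
    rw [norm_sub_sq_real, real_inner_smul_right, norm_smul, Real.norm_of_nonneg hε.le]
    field_simp
    ring
  rw [← sub_nonneg, hsq]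
  positivity

theorem norm_add_smul_sq_le {θ : ℝ} (hθ : 2 * θ < 1) (x y : E) :
    ‖x + θ • y‖ ^ 2 ≤ (1 + θ ^ 2 / (1 - 2 * θ)) * ‖x‖ ^ 2 + (1 - θ) ^ 2 * ‖y‖ ^ 2 := by
  have hyoung := two_mul_inner_le_div_add_mul (sub_pos.mpr hθ) (θ • x) y
  rw [norm_smul, real_inner_smul_left, Real.norm_eq_abs, mul_pow, sq_abs] at hyoung
  rw [norm_add_sq_real, real_inner_smul_right, norm_smul, Real.norm_eq_abs, mul_pow, sq_abs]
  linarith [mul_div_right_comm (θ ^ 2) (‖x‖ ^ 2) (1 - 2 * θ)]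

theorem norm_sq_eq_norm_sub_smul_sq_add (c : ℝ) (x y : E) :
    ‖x‖ ^ 2 = ‖x - c • y‖ ^ 2 + 2 * c * ⟪x, y⟫ - c ^ 2 * ‖y‖ ^ 2 := by
  rw [norm_sub_sq_real, real_inner_smul_right, norm_smul, Real.norm_eq_abs, mul_pow, sq_abs]
  ring

end InnerProductSpace

theorem stmt_15 {d : ℕ} (θ : ℝ) (hθ : θ ∈ Set.Ico (0 : ℝ) (1 / 2))
    (e e' g g' S : EuclideanSpace ℝ (Fin d))
    (heg : ⟪e, g⟫ ≤ 0) (heg' : ⟪e', g'⟫ ≤ 0)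
    (hrec : e' = e + S + θ • g + (1 - θ) • g') :
    ‖e'‖ ^ 2 ≤ ‖e‖ ^ 2 + 2 * ⟪e, S⟫ + (1 + θ ^ 2 / (1 - 2 * θ)) * ‖S‖ ^ 2
      + (1 - θ) ^ 2 * (‖g‖ ^ 2 - ‖g'‖ ^ 2) := by
  obtain ⟨hθ0, hθ1⟩ := hθ
  have hshift : e' - (1 - θ) • g' = e + (S + θ • g) := by
    rw [hrec]
    abel
  have hexpand := norm_sq_eq_norm_sub_smul_sq_add (1 - θ) e' g'
  rw [hshift, norm_add_sq_real, inner_add_right, real_inner_smul_right] at hexpand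
  have hyoung := norm_add_smul_sq_le (θ := θ) (by linarith) S g
  have hdrift := mul_nonpos_of_nonneg_of_nonpos hθ0 heg
  have hdrift' := mul_nonpos_of_nonneg_of_nonpos (by linarith : (0 : ℝ) ≤ 1 - θ) heg'
  linarith
end

section
/- Let $R_+$ be a finite nonempty set of nonzero vectors in $\mathbb{R}^d$, let $k:R_+\to(0,\infty)$, let $\sigma\in\mathbb{R}^{d\times r}$ with columns $\sigma_{\cdot,1},\ldots,\sigma_{\cdot,r}$ and Frobenius norm $|\sigma|$, and let $p\ge 0$. Let $x\in\mathbb{R}^d$ satisfy $\langle\beta,x\rangle>0$ for all $\beta\in R_+$ together with the identity $\Big|\sum_{\beta\in R_+}\frac{\beta}{\langle\beta,x\rangle}\Big|^2=\sum_{\beta\in R_+}\frac{|\beta|^2}{\langle\beta,x\rangle^2}$, and suppose $(p+1)|\sigma|^2\le 2k(\beta)$ for every $\beta\in R_+$. Then $p\sum_{j=1}^r\Big\langle\sum_{\beta\in R_+}\frac{\beta}{\langle\beta,x\rangle},\,\sigma_{\cdot,j}\Big\rangle^2+\sum_{j=1}^r\sum_{\beta\in R_+}\frac{\langle\beta,\sigma_{\cdot,j}\rangle^2}{\langle\beta,x\rangle^2}\le\sum_{\beta\in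 R_+}\frac{2k(\beta)|\beta|^2}{\langle\beta,x\rangle^2}$. Moreover, if $r=d$ and $\sigma$ is diagonal, the same conclusion holds under the weaker hypothesis $(p+1)\max_{i=1,\ldots,d}\sigma_{i,i}^2\le 2k(\beta)$ for every $\beta\in R_+$. -/
theorem stmt_16 {d r : ℕ} (hd : 0 < d)
    (Rp : Finset (Fin d → ℝ)) (hne : Rp.Nonempty)
    (h0 : ∀ β ∈ Rp, β ≠ 0)
    (k : (Fin d → ℝ) → ℝ) (hk : ∀ β ∈ Rp, 0 < k β)
    (p : ℝ) (hp : 0 ≤ p)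
    (x : Fin d → ℝ) (hx : ∀ β ∈ Rp, 0 < ∑ l, β l * x l)
    -- the identity `|∑_β β/⟨β,x⟩|² = ∑_β |β|²/⟨β,x⟩²`
    (hid : ∑ i, (∑ β ∈ Rp, β i / (∑ l, β l * x l)) ^ 2
        = ∑ β ∈ Rp, (∑ i, β i ^ 2) / (∑ l, β l * x l) ^ 2) :
    -- general case: `(p+1)|σ|² ≤ 2k(β)` with `|σ|` the Frobenius norm
    (∀ σ : Fin d → Fin r → ℝ,
      (∀ β ∈ Rp, (p + 1) * (∑ i, ∑ j, σ i j ^ 2) ≤ 2 * k β) →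
      p * ∑ j : Fin r, (∑ i, (∑ β ∈ Rp, β i / (∑ l, β l * x l)) * σ i j) ^ 2
          + ∑ j : Fin r, ∑ β ∈ Rp, (∑ i, β i * σ i j) ^ 2 / (∑ l, β l * x l) ^ 2
        ≤ ∑ β ∈ Rp, 2 * k β * (∑ i, β i ^ 2) / (∑ l, β l * x l) ^ 2) ∧
    -- diagonal case (`r = d`): `(p+1) maxᵢ σᵢᵢ² ≤ 2k(β)` suffices
    (∀ σ : Fin d → Fin d → ℝ,
      (∀ i j, i ≠ j → σ i j = 0) →
      (∀ β ∈ Rp, (p + 1) *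
          Finset.univ.sup' (Finset.univ_nonempty_iff.mpr ⟨⟨0, hd⟩⟩)
            (fun i => σ i i ^ 2) ≤ 2 * k β) →
      p * ∑ j : Fin d, (∑ i, (∑ β ∈ Rp, β i / (∑ l, β l * x l)) * σ i j) ^ 2
          + ∑ j : Fin d, ∑ β ∈ Rp, (∑ i, β i * σ i j) ^ 2 / (∑ l, β l * x l) ^ 2
        ≤ ∑ β ∈ Rp, 2 * k β * (∑ i, β i ^ 2) / (∑ l, β l * x l) ^ 2) := by
  classical
  set c : (Fin d → ℝ) → ℝ := fun β => ∑ l, β l * x l with hcdef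
  have hc2 : ∀ β ∈ Rp, (0:ℝ) < (c β) ^ 2 := fun β hβ => pow_pos (hx β hβ) 2
  set S : ℝ := ∑ β ∈ Rp, (∑ i, β i ^ 2) / (c β) ^ 2 with hSdef
  have hterm : ∀ β ∈ Rp, (0:ℝ) ≤ (∑ i, β i ^ 2) / (c β) ^ 2 := fun β hβ =>
    div_nonneg (Finset.sum_nonneg fun i _ => sq_nonneg _) (le_of_lt (hc2 β hβ))
  have hvS : ∑ i, (∑ β ∈ Rp, β i / c β) ^ 2 = S := hid
  have final : ∀ (F : ℝ), (∀ β ∈ Rp, (p + 1) * F ≤ 2 * k β) →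
      (p + 1) * F * S ≤ ∑ β ∈ Rp, 2 * k β * (∑ i, β i ^ 2) / (c β) ^ 2 := by
    intro F hbd
    calc (p + 1) * F * S = ∑ β ∈ Rp, (p + 1) * F * ((∑ i, β i ^ 2) / (c β) ^ 2) := by
          rw [hSdef, Finset.mul_sum]
      _ ≤ ∑ β ∈ Rp, 2 * k β * ((∑ i, β i ^ 2) / (c β) ^ 2) :=
          Finset.sum_le_sum fun β hβ => mul_le_mul_of_nonneg_right (hbd β hβ) (hterm β hβ)
      _ = _ := by simp [mul_div_assoc]
  constructor
  · intro σ hσ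
    set F : ℝ := ∑ i, ∑ j, σ i j ^ 2 with hF
    have hFswap : F = ∑ j : Fin r, ∑ i, σ i j ^ 2 := Finset.sum_comm
    have hA : ∑ j : Fin r, (∑ i, (∑ β ∈ Rp, β i / c β) * σ i j) ^ 2 ≤ S * F := by
      rw [hFswap, Finset.mul_sum]
      refine Finset.sum_le_sum fun j _ => ?_
      calc (∑ i, (∑ β ∈ Rp, β i / c β) * σ i j) ^ 2
          ≤ (∑ i, (∑ β ∈ Rp, β i / c β) ^ 2) * (∑ i, σ i j ^ 2) :=
            Finset.sum_mul_sq_le_sq_mul_sq _ _ _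
        _ = S * (∑ i, σ i j ^ 2) := by rw [hvS]
    have hB : ∑ j : Fin r, ∑ β ∈ Rp, (∑ i, β i * σ i j) ^ 2 / (c β) ^ 2 ≤ S * F := by
      rw [hFswap, Finset.mul_sum]
      refine Finset.sum_le_sum fun j _ => ?_
      rw [hSdef, Finset.sum_mul]
      refine Finset.sum_le_sum fun β hβ => ?_
      rw [div_mul_eq_mul_div]
      exact (div_le_div_iff_of_pos_right (hc2 β hβ)).mpr (Finset.sum_mul_sq_le_sq_mul_sq _ _ _)
    calc p * ∑ j : Fin r, (∑ i, (∑ β ∈ Rp, β i / c β) * σ i j) ^ 2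
          + ∑ j : Fin r, ∑ β ∈ Rp, (∑ i, β i * σ i j) ^ 2 / (c β) ^ 2
        ≤ p * (S * F) + S * F := add_le_add (mul_le_mul_of_nonneg_left hA hp) hB
      _ = (p + 1) * F * S := by ring
      _ ≤ _ := final F hσ
  · intro σ hdiag hσ
    set M : ℝ := Finset.univ.sup' (Finset.univ_nonempty_iff.mpr ⟨⟨0, hd⟩⟩)
      (fun i => σ i i ^ 2) with hM
    have hle : ∀ i : Fin d, σ i i ^ 2 ≤ M := fun i =>
      Finset.le_sup' (fun i => σ i i ^ 2) (Finset.mem_univ i)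
    have hdot : ∀ (w : Fin d → ℝ) (j : Fin d), (∑ i, w i * σ i j) = w j * σ j j := by
      intro w j
      rw [Finset.sum_eq_single j]
      · intro i _ hij; rw [hdiag i j hij, mul_zero]
      · intro h; exact absurd (Finset.mem_univ j) h
    have hA : ∑ j : Fin d, (∑ i, (∑ β ∈ Rp, β i / c β) * σ i j) ^ 2 ≤ S * M := by
      calc ∑ j : Fin d, (∑ i, (∑ β ∈ Rp, β i / c β) * σ i j) ^ 2
          = ∑ j : Fin d, (∑ β ∈ Rp, β j / c β) ^ 2 * σ j j ^ 2 := by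
            refine Finset.sum_congr rfl fun j _ => ?_
            rw [hdot, mul_pow]
        _ ≤ ∑ j : Fin d, (∑ β ∈ Rp, β j / c β) ^ 2 * M :=
            Finset.sum_le_sum fun j _ =>
              mul_le_mul_of_nonneg_left (hle j) (sq_nonneg _)
        _ = S * M := by rw [← Finset.sum_mul, hvS]
    have hB : ∑ j : Fin d, ∑ β ∈ Rp, (∑ i, β i * σ i j) ^ 2 / (c β) ^ 2 ≤ S * M := by
      calc ∑ j : Fin d, ∑ β ∈ Rp, (∑ i, β i * σ i j) ^ 2 / (c β) ^ 2
          = ∑ j : Fin d, ∑ β ∈ Rp, (β j ^ 2 * σ j j ^ 2) / (c β) ^ 2 := by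
            refine Finset.sum_congr rfl fun j _ => Finset.sum_congr rfl fun β _ => ?_
            rw [hdot, mul_pow]
        _ ≤ ∑ j : Fin d, ∑ β ∈ Rp, (β j ^ 2 * M) / (c β) ^ 2 :=
            Finset.sum_le_sum fun j _ => Finset.sum_le_sum fun β hβ =>
              (div_le_div_iff_of_pos_right (hc2 β hβ)).mpr
                (mul_le_mul_of_nonneg_left (hle j) (sq_nonneg _))
        _ = S * M := by
            rw [Finset.sum_comm, hSdef, Finset.sum_mul]
            refine Finset.sum_congr rfl fun β hβ => ?_
            rw [← Finset.sum_div, ← Finset.sum_mul, div_mul_eq_mul_div]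
    calc p * ∑ j : Fin d, (∑ i, (∑ β ∈ Rp, β i / c β) * σ i j) ^ 2
          + ∑ j : Fin d, ∑ β ∈ Rp, (∑ i, β i * σ i j) ^ 2 / (c β) ^ 2
        ≤ p * (S * M) + S * M := add_le_add (mul_le_mul_of_nonneg_left hA hp) hB
      _ = (p + 1) * M * S := by ring
      _ ≤ _ := final M hσ
end
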